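/- In any algebra (S,*,') satisfying the three axioms, the identity (x' * x) * (x''' * x) = x''' * x holds for all x in S. -/

import Mathlib

/-!
Write `e = x''' * x''''`. The axioms give `x' * x = x' * x''` and make `x' * x''` idempotent;
at `x''` this yields `(x''' * x'') * x' = (e * e) * x' = e * (e * x''') = x'''`, whence
`x''' * x = x''' * x''`. The claim then reads `(x' * x'') * (x''' * x'') = x''' * x''`, and (E2)
turns the left side into `((x''' * x'') * x') * x = x''' * x`.
-/

section

variable {S : Type*} {m : S → S → S} {i : S → S}

local infixl:70 " ∗ " => m

local postfix:max "†" => i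

theorem inv_mul_eq_inv_mul_inv_inv (E1 : ∀ x, x ∗ x† ∗ x = x)
    (E3 : ∀ x y z, x ∗ y ∗ z = x ∗ (y ∗ z††)) (x : S) :
    x† ∗ x = x† ∗ x†† :=
  calc x† ∗ x = x† ∗ x†† ∗ x† ∗ x := by rw [E1]
    _ = x† ∗ (x†† ∗ x†††) ∗ x := by rw [E3 x† x†† x†]
    _ = x† ∗ (x†† ∗ x††† ∗ x††) := E3 _ _ _
    _ = x† ∗ x†† := by rw [E1]

theorem inv_mul_inv_inv_mul_self (E1 : ∀ x, x ∗ x† ∗ x = x)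
    (E3 : ∀ x y z, x ∗ y ∗ z = x ∗ (y ∗ z††)) (x : S) :
    x† ∗ x†† ∗ (x† ∗ x††) = x† ∗ x†† :=
  calc x† ∗ x†† ∗ (x† ∗ x††) = x† ∗ x†† ∗ x† ∗ x := (E3 _ x† x).symm
    _ = x† ∗ x := by rw [E1]
    _ = x† ∗ x†† := inv_mul_eq_inv_mul_inv_inv E1 E3 x

theorem inv_three_mul_inv_two_mul_inv (E1 : ∀ x, x ∗ x† ∗ x = x)
    (E3 : ∀ x y z, x ∗ y ∗ z = x ∗ (y ∗ z††)) (x : S) :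
    x††† ∗ x†† ∗ x† = x††† := by
  set e := x††† ∗ x††††
  calc x††† ∗ x†† ∗ x† = e ∗ x† := by rw [inv_mul_eq_inv_mul_inv_inv E1 E3]
    _ = e ∗ e ∗ x† := by rw [inv_mul_inv_inv_mul_self E1 E3]
    _ = e ∗ (e ∗ x†††) := E3 _ _ _
    _ = x††† := by rw [E1, E1]

theorem inv_three_mul_eq_inv_three_mul_inv_two (E1 : ∀ x, x ∗ x† ∗ x = x)
    (E3 : ∀ x y z, x ∗ y ∗ z = x ∗ (y ∗ z††)) (x : S) :
    x††† ∗ x = x††† ∗ x†† :=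
  calc x††† ∗ x = x††† ∗ (x†† ∗ x†††) ∗ x := by
        rw [← E3, inv_three_mul_inv_two_mul_inv E1 E3]
    _ = x††† ∗ (x†† ∗ x††† ∗ x††) := E3 _ _ _
    _ = x††† ∗ x†† := by rw [E1]

end

theorem stmt (S : Type*) (m : S → S → S) (i : S → S)
    (E1 : ∀ x, m (m x (i x)) x = x)
    (E2 : ∀ x y, m (m x (i x)) (m (i y) y) = m (m (i y) y) (m x (i x)))
    (E3 : ∀ x y z, m (m x y) z = m x (m y (i (i z)))) :
    ∀ x, m (m (i x) x) (m (i (i (i x))) x) = m (i (i (i x))) x := by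
  intro x
  calc m (m (i x) x) (m (i (i (i x))) x)
      = m (m (i x) (i (i x))) (m (i (i (i x))) (i (i x))) := by
        rw [inv_mul_eq_inv_mul_inv_inv E1 E3, inv_three_mul_eq_inv_three_mul_inv_two E1 E3]
    _ = m (m (i (i (i x))) (i (i x))) (m (i x) (i (i x))) := E2 _ _
    _ = m (m (m (i (i (i x))) (i (i x))) (i x)) x := (E3 _ _ _).symm
    _ = m (i (i (i x))) x := by rw [inv_three_mul_inv_two_mul_inv E1 E3]
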